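/- Assume that for every s ∈ S, d(inl s, inr φ(s)) ≤ γ · W_d(κ(inl s), κ(inr φ(s))). Then ∫ d(inl s, inr φ(s)) dξ(s) ≤ γ L_P/(1−γ). -/

import Mathlib

open MeasureTheory ProbabilityTheory

/-- Total variation distance between two measures on `X`:
the supremum over measurable sets of the absolute difference of their masses. -/
noncomputable def tvDist {X : Type*} [MeasurableSpace X] (μ ν : Measure X) : ℝ :=
  ⨆ A : {A : Set X // MeasurableSet A}, |(μ A.1).toReal - (ν A.1).toReal|

/-- Dual (Kantorovich) Wasserstein distance between two measures with respect to a cost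
function `d`: the supremum over bounded measurable `d`-Lipschitz functions of the absolute
difference of their integrals. -/
noncomputable def wassDual {X : Type*} [MeasurableSpace X] (d : X → X → ℝ)
    (μ ν : Measure X) : ℝ :=
  ⨆ f : {f : X → ℝ // Measurable f ∧ (∃ C, ∀ x, |f x| ≤ C) ∧ ∀ x y, |f x - f y| ≤ d x y},
    |(∫ x, f.1 x ∂μ) - ∫ x, f.1 x ∂ν|

/-!
Write `D s = d (inl s) (inr (φ s))`. For a test function `f` of the dual Wasserstein distance,
compare `∫ f ∘ inl ∂P(s)` and `∫ f ∘ inr ∂P̄(φ s)` through `∫ f ∘ inr ∘ φ ∂P(s)`: the first gap is at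
most `∫ D ∂P(s)` since `f` is `d`-Lipschitz, the second at most `TV(φ∗P(s), P̄(φ s))` since
`f ∘ inr` has oscillation at most `1` on the finite space. Hence
`D s ≤ γ (∫ D ∂P(s) + TV(φ∗P(s), P̄(φ s)))`, and integrating against the invariant `ξ` gives
`∫ D ∂ξ ≤ γ (∫ D ∂ξ + L_P)`.
-/

open Set

section TotalVariation

variable {X : Type*} [MeasurableSpace X]

lemma tvDist_comm (μ ν : Measure X) : tvDist μ ν = tvDist ν μ := by
  simp only [tvDist, abs_sub_comm]

variable (μ ν : Measure X) [IsProbabilityMeasure μ] [IsProbabilityMeasure ν]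

lemma abs_measureReal_sub_measureReal_le_one (A : Set X) : |μ.real A - ν.real A| ≤ 1 := by
  have hμ : μ.real A ≤ 1 := measureReal_le_one
  have hν : ν.real A ≤ 1 := measureReal_le_one
  rw [abs_sub_le_iff]
  constructor <;> linarith [measureReal_nonneg (μ := μ) (s := A),
    measureReal_nonneg (μ := ν) (s := A)]

lemma tvDist_bddAbove :
    BddAbove (range fun A : {A : Set X // MeasurableSet A} => |μ.real A - ν.real A|) :=
  ⟨1, by rintro _ ⟨A, rfl⟩; exact abs_measureReal_sub_measureReal_le_one μ ν A⟩

lemma measureReal_sub_measureReal_le_tvDist {A : Set X} (hA : MeasurableSet A) :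
    μ.real A - ν.real A ≤ tvDist μ ν :=
  (le_abs_self _).trans (le_ciSup (tvDist_bddAbove μ ν) ⟨A, hA⟩)

lemma tvDist_nonneg : 0 ≤ tvDist μ ν :=
  (abs_nonneg _).trans (le_ciSup (tvDist_bddAbove μ ν) ⟨∅, .empty⟩)

lemma tvDist_le_one : tvDist μ ν ≤ 1 :=
  have : Nonempty {A : Set X // MeasurableSet A} := ⟨⟨∅, .empty⟩⟩
  ciSup_le fun A => abs_measureReal_sub_measureReal_le_one μ ν A

end TotalVariation

lemma measurable_tvDist {S Y : Type*} [MeasurableSpace S] [MeasurableSpace Y] [Finite Y]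
    {μ ν : S → Measure Y} (hμ : ∀ A, MeasurableSet A → Measurable fun s => μ s A)
    (hν : ∀ A, MeasurableSet A → Measurable fun s => ν s A) :
    Measurable fun s => tvDist (μ s) (ν s) :=
  Measurable.iSup fun A =>
    ((hμ A.1 A.2).ennreal_toReal.sub (hν A.1 A.2).ennreal_toReal).abs

lemma integrable_tvDist {S Y : Type*} [MeasurableSpace S] [MeasurableSpace Y] [Finite Y]
    {μ ν : S → Measure Y} [∀ s, IsProbabilityMeasure (μ s)] [∀ s, IsProbabilityMeasure (ν s)]
    (hμ : ∀ A, MeasurableSet A → Measurable fun s => μ s A)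
    (hν : ∀ A, MeasurableSet A → Measurable fun s => ν s A) (ξ : Measure S) [IsFiniteMeasure ξ] :
    Integrable (fun s => tvDist (μ s) (ν s)) ξ :=
  .of_mem_Icc 0 1 (measurable_tvDist hμ hν).aemeasurable
    (ae_of_all _ fun _ => ⟨tvDist_nonneg _ _, tvDist_le_one _ _⟩)

section FiniteSpace

variable {Y : Type*} [Fintype Y] [MeasurableSpace Y] [DiscreteMeasurableSpace Y]
  {μ ν : Measure Y} [IsProbabilityMeasure μ] [IsProbabilityMeasure ν]

lemma integral_sub_integral_le_tvDist {h : Y → ℝ} (hh : ∀ y, h y ∈ Icc 0 1) :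
    ∫ y, h y ∂μ - ∫ y, h y ∂ν ≤ tvDist μ ν := by
  classical
  set A := Finset.univ.filter fun y => ν.real {y} ≤ μ.real {y}
  calc ∫ y, h y ∂μ - ∫ y, h y ∂ν = ∑ y, (μ.real {y} - ν.real {y}) * h y := by
        simp only [integral_fintype (.of_finite), smul_eq_mul, sub_mul,
          Finset.sum_sub_distrib]
    _ ≤ ∑ y, if ν.real {y} ≤ μ.real {y} then μ.real {y} - ν.real {y} else 0 := by
        refine Finset.sum_le_sum fun y _ => ?_
        split_ifs with hy
        · exact mul_le_of_le_one_right (sub_nonneg.2 hy) (hh y).2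
        · exact mul_nonpos_of_nonpos_of_nonneg (by linarith) (hh y).1
    _ = μ.real A - ν.real A := by
        rw [← Finset.sum_filter, Finset.sum_sub_distrib, sum_measureReal_singleton,
          sum_measureReal_singleton]
    _ ≤ tvDist μ ν := measureReal_sub_measureReal_le_tvDist μ ν .of_discrete

lemma abs_integral_sub_integral_le_tvDist {g : Y → ℝ} (hg : ∀ x y, g x - g y ≤ 1) :
    |∫ y, g y ∂μ - ∫ y, g y ∂ν| ≤ tvDist μ ν := by
  have := nonempty_of_isProbabilityMeasure μ
  obtain ⟨y₀, hy₀⟩ := exists_eq_ciInf_of_finite (f := g)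
  have hle : ∀ y, ⨅ y, g y ≤ g y := ciInf_le (finite_range g).bddBelow
  have hshift : ∀ y, g y - ⨅ y, g y ∈ Icc 0 1 := fun y =>
    ⟨sub_nonneg.2 (hle y), hy₀ ▸ hg y y₀⟩
  have hint : ∀ (m : Measure Y) [IsProbabilityMeasure m],
      ∫ y, (g y - ⨅ y, g y) ∂m = ∫ y, g y ∂m - ⨅ y, g y := fun m _ => by
    rw [integral_sub (.of_finite) (integrable_const _), integral_const, probReal_univ, one_smul]
  have h₁ := integral_sub_integral_le_tvDist (μ := μ) (ν := ν) hshift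
  have h₂ := integral_sub_integral_le_tvDist (μ := ν) (ν := μ) hshift
  rw [hint, hint] at h₁ h₂
  rw [tvDist_comm] at h₂
  exact abs_sub_le_iff.2 ⟨by linarith, by linarith⟩

end FiniteSpace

lemma integral_mem_Icc_zero_one {α : Type*} [MeasurableSpace α] {μ : Measure α}
    [IsProbabilityMeasure μ] {f : α → ℝ} (hf : ∀ x, f x ∈ Icc 0 1) :
    ∫ x, f x ∂μ ∈ Icc 0 1 :=
  ⟨integral_nonneg fun x => (hf x).1,
    (integral_mono_of_nonneg (ae_of_all _ fun x => (hf x).1) (integrable_const 1)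
      (ae_of_all _ fun x => (hf x).2)).trans (by simp)⟩

lemma ProbabilityTheory.Kernel.invariant_of_forall_measure_eq_lintegral {S : Type*}
    [MeasurableSpace S] {P : Kernel S S} {ξ : Measure S}
    (h : ∀ A, MeasurableSet A → ξ A = ∫⁻ s, P s A ∂ξ) : P.Invariant ξ :=
  Measure.ext fun A hA => by rw [Measure.bind_apply hA P.aemeasurable, ← h A hA]

lemma ProbabilityTheory.Kernel.Invariant.integral_integral {S : Type*} [MeasurableSpace S]
    {P : Kernel S S} [IsSFiniteKernel P] {ξ : Measure S} [SFinite ξ] (hP : P.Invariant ξ)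
    {f : S → ℝ} (hf : Integrable f ξ) :
    ∫ s, ∫ t, f t ∂P s ∂ξ = ∫ s, f s ∂ξ := by
  have hcomp : (P ∘ₖ Kernel.const Unit ξ) () = ξ := by
    rw [← Measure.comp_eq_comp_const_apply]; exact hP
  rw [← hcomp] at hf
  conv_rhs => rw [← hcomp]
  exact (Kernel.integral_comp hf).symm

lemma wassDual_map_inl_map_inr_le {S Y : Type*} [MeasurableSpace S] [Fintype Y]
    [MeasurableSpace Y] [DiscreteMeasurableSpace Y] {d : S ⊕ Y → S ⊕ Y → ℝ}
    (hd01 : ∀ x y, d x y ∈ Icc 0 1) {φ : S → Y} (hφ : Measurable φ)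
    (hD : Measurable fun s => d (.inl s) (.inr (φ s)))
    (μ : Measure S) [IsProbabilityMeasure μ] (ν : Measure Y) [IsProbabilityMeasure ν] :
    wassDual d (μ.map .inl) (ν.map .inr) ≤
      ∫ s, d (.inl s) (.inr (φ s)) ∂μ + tvDist (μ.map φ) ν := by
  have : IsProbabilityMeasure (μ.map φ) := Measure.isProbabilityMeasure_map hφ.aemeasurable
  have : Nonempty {f : S ⊕ Y → ℝ // Measurable f ∧ (∃ C, ∀ x, |f x| ≤ C) ∧
      ∀ x y, |f x - f y| ≤ d x y} :=
    ⟨⟨0, measurable_const, ⟨0, by simp⟩, fun x y => by simpa using (hd01 x y).1⟩⟩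
  refine ciSup_le fun ⟨f, hf, ⟨C, hC⟩, hfd⟩ => ?_
  have hbdd : ∀ {g : S → ℝ}, Measurable g → (∀ s, |g s| ≤ C) → Integrable g μ :=
    fun hg hgC => .of_bound hg.aestronglyMeasurable C (ae_of_all _ hgC)
  have hinl : Integrable (fun s => f (.inl s)) μ := hbdd (hf.comp measurable_inl) fun s => hC _
  have hinr : Integrable (fun s => f (.inr (φ s))) μ :=
    hbdd (hf.comp (measurable_inr.comp hφ)) fun s => hC _
  have hcoupling : |∫ s, f (.inl s) ∂μ - ∫ s, f (.inr (φ s)) ∂μ| ≤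
      ∫ s, d (.inl s) (.inr (φ s)) ∂μ := by
    rw [← integral_sub hinl hinr]
    exact abs_integral_le_integral_abs.trans <| integral_mono (hinl.sub hinr).abs
      (.of_mem_Icc 0 1 hD.aemeasurable (ae_of_all _ fun s => hd01 _ _)) fun s => hfd _ _
  have htv : |∫ s, f (.inr (φ s)) ∂μ - ∫ y, f (.inr y) ∂ν| ≤ tvDist (μ.map φ) ν := by
    rw [← integral_map (f := fun y => f (.inr y)) hφ.aemeasurable
      (hf.comp measurable_inr).aestronglyMeasurable]
    exact abs_integral_sub_integral_le_tvDist fun x y =>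
      (le_abs_self _).trans ((hfd _ _).trans (hd01 _ _).2)
  rw [integral_map measurable_inl.aemeasurable hf.aestronglyMeasurable,
    integral_map measurable_inr.aemeasurable hf.aestronglyMeasurable]
  exact (abs_sub_le _ _ _).trans (add_le_add hcoupling htv)

theorem bisimulation_bound_labels_general
    {S : Type*} [MeasurableSpace S]
    {Sb : Type*} [Fintype Sb] [MeasurableSpace Sb] [DiscreteMeasurableSpace Sb]
    (P : Kernel S S) [IsMarkovKernel P]
    (Pb : Sb → PMF Sb)
    (φ : S → Sb) (hφ : Measurable φ)
    (ξ : Measure S) [IsProbabilityMeasure ξ]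
    (hinv : ∀ A : Set S, MeasurableSet A → ξ A = ∫⁻ s, P s A ∂ξ)
    (γ : ℝ) (hγ0 : 0 ≤ γ) (hγ1 : γ < 1)
    (d : (S ⊕ Sb) → (S ⊕ Sb) → ℝ)
    (hdmeas : Measurable (Function.uncurry d))
    (hd01 : ∀ x y, d x y ∈ Set.Icc (0 : ℝ) 1)
    (hfix : ∀ s : S,
      d (Sum.inl s) (Sum.inr (φ s)) ≤
        γ * wassDual d (((P s).map Sum.inl : Measure (S ⊕ Sb)))
          (((Pb (φ s)).toMeasure.map Sum.inr : Measure (S ⊕ Sb)))) :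
    ∫ s, d (Sum.inl s) (Sum.inr (φ s)) ∂ξ ≤
      γ * (∫ s, tvDist ((P s).map φ) ((Pb (φ s)).toMeasure) ∂ξ) / (1 - γ) := by
  set D : S → ℝ := fun s => d (.inl s) (.inr (φ s))
  set B : S → ℝ := fun s => tvDist ((P s).map φ) (Pb (φ s)).toMeasure
  have hD : Measurable D := hdmeas.comp (measurable_inl.prodMk (measurable_inr.comp hφ))
  have hDint : Integrable D ξ := .of_mem_Icc 0 1 hD.aemeasurable (ae_of_all _ fun s => hd01 _ _)
  have hPDint : Integrable (fun s => ∫ t, D t ∂P s) ξ := .of_mem_Icc 0 1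
    (hD.comp measurable_snd).stronglyMeasurable.integral_kernel_prod_right'.measurable.aemeasurable
    (ae_of_all _ fun s => integral_mem_Icc_zero_one fun t => hd01 _ _)
  have : ∀ s, IsProbabilityMeasure ((P s).map φ) := fun s =>
    Measure.isProbabilityMeasure_map hφ.aemeasurable
  have hBint : Integrable B ξ := integrable_tvDist
    (fun A hA => by simpa only [← Kernel.map_apply _ hφ] using (P.map φ).measurable_coe hA)
    (fun A _ => (Measurable.of_discrete (f := fun x => (Pb x).toMeasure A)).comp hφ) ξ
  have hstep : ∀ s, D s ≤ γ * ((∫ t, D t ∂P s) + B s) := fun s =>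
    (hfix s).trans <| mul_le_mul_of_nonneg_left
      (wassDual_map_inl_map_inr_le hd01 hφ hD (P s) (Pb (φ s)).toMeasure) hγ0
  have hmain : ∫ s, D s ∂ξ ≤ γ * ((∫ s, D s ∂ξ) + ∫ s, B s ∂ξ) := calc
    ∫ s, D s ∂ξ ≤ ∫ s, γ * ((∫ t, D t ∂P s) + B s) ∂ξ :=
      integral_mono hDint ((hPDint.add hBint).const_mul γ) hstep
    _ = γ * ((∫ s, D s ∂ξ) + ∫ s, B s ∂ξ) := by
      rw [integral_const_mul, integral_add hPDint hBint,
        (Kernel.invariant_of_forall_measure_eq_lintegral hinv).integral_integral hDint]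
  rw [le_div_iff₀ (sub_pos.2 hγ1)]
  linarith

/-- Bisimulation bound for the label-based bisimulation pseudometric: if the pseudometric `d`
on the disjoint union of the ground and latent state spaces satisfies
`d(s, φ(s)) ≤ γ·W_d(κ(s), κ(φ(s)))`, then the expected distance between a state and its
embedding under the stationary distribution `ξ` is at most `γ·L_P/(1-γ)`. -/
theorem bisimulation_bound_labels
    {S : Type*} [MeasurableSpace S]
    {Sb : Type*} [Fintype Sb] [Nonempty Sb] [MeasurableSpace Sb] [DiscreteMeasurableSpace Sb]
    (P : Kernel S S) [IsMarkovKernel P]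
    (Pb : Sb → PMF Sb)
    (φ : S → Sb) (hφ : Measurable φ)
    (ξ : Measure S) [IsProbabilityMeasure ξ]
    (hinv : ∀ A : Set S, MeasurableSet A → ξ A = ∫⁻ s, P s A ∂ξ)
    (γ : ℝ) (hγ0 : 0 ≤ γ) (hγ1 : γ < 1)
    (d : (S ⊕ Sb) → (S ⊕ Sb) → ℝ)
    (hdmeas : Measurable (Function.uncurry d))
    (hd01 : ∀ x y, d x y ∈ Set.Icc (0 : ℝ) 1)
    (hdrefl : ∀ x, d x x = 0)
    (hdsymm : ∀ x y, d x y = d y x)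
    (hdtri : ∀ x y z, d x z ≤ d x y + d y z)
    (hfix : ∀ s : S,
      d (Sum.inl s) (Sum.inr (φ s)) ≤
        γ * wassDual d (((P s).map Sum.inl : Measure (S ⊕ Sb)))
          (((Pb (φ s)).toMeasure.map Sum.inr : Measure (S ⊕ Sb)))) :
    ∫ s, d (Sum.inl s) (Sum.inr (φ s)) ∂ξ ≤
      γ * (∫ s, tvDist ((P s).map φ) ((Pb (φ s)).toMeasure) ∂ξ) / (1 - γ) :=
  bisimulation_bound_labels_general P Pb φ hφ ξ hinv γ hγ0 hγ1 d hdmeas hd01 hfix
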